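/- If there is a k-cycle through vertex v_i in digraph g (k ≥ 2), with cycle vertices v_i = w₀, w₁, …, w_{k−1}, w_k = v_i, then v_i ∈ (T^{k−1})_{μ₂ i} where v_{μ₂} = w₁; in particular (T^{k−1})_{μ₂ i} ≠ V and consequently (S^k)_{ii} ≠ V. -/

import Mathlib

open Set

/-- Adjacency set matrix `T`: `T i j = {v_j}` if `(v_i,v_j)` is an arc and `i ≠ j`,
and `T i j = V` (the universal set) otherwise. -/
def Tmat (n : ℕ) (A : Fin n → Fin n → Prop) (i j : Fin n) : Set (Fin n) :=
  {x | (A i j ∧ i ≠ j) → x = j}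

/-- Right powers of `T`: `Tpow n A k` is the `(k+1)`-st right power `T^(k+1)`. -/
def Tpow (n : ℕ) (A : Fin n → Fin n → Prop) : ℕ → Fin n → Fin n → Set (Fin n)
  | 0 => Tmat n A
  | k + 1 => fun i j => {x | i ≠ j → x ∈ ⋂ μ, Tpow n A k i μ ∪ Tmat n A μ j}

/-- Start-vertex adjacency set matrix `R`. -/
def Rmat (n : ℕ) (A : Fin n → Fin n → Prop) (i j : Fin n) : Set (Fin n) :=
  {x | (A i j ∧ i ≠ j) → x = i}

/-- A `k`-path from `i` to `j`: `k+1` pairwise distinct vertices from `i` to `j`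
following arcs of the digraph. -/
def IsPath (n : ℕ) (A : Fin n → Fin n → Prop) (k : ℕ) (i j : Fin n) : Prop :=
  ∃ w : Fin (k + 1) → Fin n, w 0 = i ∧ w (Fin.last k) = j ∧ Function.Injective w ∧
    ∀ x : Fin k, A (w x.castSucc) (w x.succ)

/-- A `k`-cycle through `i`: a closed arc-walk of length `k` at `i` whose first `k`
vertices are pairwise distinct. -/
def IsCycle (n : ℕ) (A : Fin n → Fin n → Prop) (k : ℕ) (i : Fin n) : Prop :=
  ∃ w : Fin (k + 1) → Fin n, w 0 = i ∧ w (Fin.last k) = i ∧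
    Function.Injective (fun x : Fin k => w x.castSucc) ∧
    ∀ x : Fin k, A (w x.castSucc) (w x.succ)

/-! A path `u₀ → u₁ → ⋯ → u_{m+1}` with distinct vertices keeps its start vertex out of
`(T^{m+1})_{u₀ u_{m+1}}`: the intersection defining that entry contains the term
`(T^m)_{u₀ u_m} ∪ T_{u_m u_{m+1}}`, which misses `u₀` by induction and because
`T_{u_m u_{m+1}} = {u_{m+1}}`. A `k`-cycle through `v_i` contains the two paths
`w₁ → ⋯ → w_k = v_i` and `v_i = w₀ → ⋯ → w_{k-1}`. The first shows `(T^{k-1})_{μ₂ i} ≠ V`;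
the second, together with `R_{w_{k-1} i} = {w_{k-1}}`, keeps `v_i` out of `(S^k)_{ii}`.
The membership `v_i ∈ (T^{k-1})_{μ₂ i}` holds because the end vertex `v_j` lies in every
`(T^m)_{ij}`. -/

section

variable {n : ℕ} {A : Fin n → Fin n → Prop}

lemma Tmat_eq_singleton {i j : Fin n} (ha : A i j) (hne : i ≠ j) : Tmat n A i j = {j} :=
  ext fun _ => ⟨fun h => h ⟨ha, hne⟩, fun h _ => h⟩

lemma Rmat_eq_singleton {i j : Fin n} (ha : A i j) (hne : i ≠ j) : Rmat n A i j = {i} :=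
  ext fun _ => ⟨fun h => h ⟨ha, hne⟩, fun h _ => h⟩

lemma mem_Tpow_succ {m : ℕ} {i j x : Fin n} (hne : i ≠ j) :
    x ∈ Tpow n A (m + 1) i j ↔ ∀ μ, x ∈ Tpow n A m i μ ∪ Tmat n A μ j :=
  ⟨fun h => mem_iInter.1 (h hne), fun h _ => mem_iInter.2 h⟩

lemma mem_Tpow_self (m : ℕ) (i j : Fin n) : j ∈ Tpow n A m i j := by
  cases m with
  | zero => exact fun _ => rfl
  | succ m => exact fun _ => mem_iInter.2 fun _ => Or.inr fun _ => rfl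

lemma isPath_init {k : ℕ} {w : Fin (k + 2) → Fin n} (hinj : Function.Injective (Fin.init w))
    (harc : ∀ x : Fin (k + 1), A (w x.castSucc) (w x.succ)) :
    IsPath n A k (w 0) (w (Fin.last k).castSucc) :=
  ⟨Fin.init w, rfl, rfl, hinj, fun x => by
    simpa only [Fin.init, Fin.succ_castSucc] using harc x.castSucc⟩

lemma IsPath.eq_of_zero {i j : Fin n} (h : IsPath n A 0 i j) : j = i := by
  obtain ⟨w, h0, hlast, -⟩ := h
  exact hlast.symm.trans h0

lemma IsPath.ne {k : ℕ} {i j : Fin n} (h : IsPath n A (k + 1) i j) : i ≠ j := by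
  obtain ⟨w, rfl, rfl, hinj, -⟩ := h
  exact hinj.ne Fin.last_pos.ne

lemma IsPath.exists_init {k : ℕ} {i j : Fin n} (h : IsPath n A (k + 1) i j) :
    ∃ μ, IsPath n A k i μ ∧ A μ j ∧ μ ≠ j := by
  obtain ⟨w, rfl, rfl, hinj, harc⟩ := h
  refine ⟨_, isPath_init (hinj.comp (Fin.castSucc_injective _)) harc, ?_,
    hinj.ne (Fin.castSucc_lt_last _).ne⟩
  simpa only [Fin.succ_last] using harc (Fin.last k)

lemma notMem_Tpow_of_isPath (m : ℕ) {i j : Fin n} (h : IsPath n A (m + 1) i j) :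
    i ∉ Tpow n A m i j := by
  obtain ⟨μ, hμ, ha, hne⟩ := h.exists_init
  induction m generalizing j μ with
  | zero =>
    obtain rfl := hμ.eq_of_zero
    rw [Tpow, Tmat_eq_singleton ha hne]
    exact hne
  | succ m ih =>
    obtain ⟨ν, hν, hνa, hνne⟩ := hμ.exists_init
    rw [mem_Tpow_succ h.ne, not_forall]
    refine ⟨μ, not_or.2 ⟨ih hμ ν hν hνa hνne, ?_⟩⟩
    rw [Tmat_eq_singleton ha hne]
    exact h.ne

lemma tail_eq_init_comp_finRotate {α : Type*} {k : ℕ} {w : Fin (k + 2) → α}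
    (hclosed : w (Fin.last _) = w 0) : Fin.tail w = Fin.init w ∘ finRotate (k + 1) := by
  ext a
  cases a using Fin.lastCases with
  | last => simp [Fin.tail, Fin.init, hclosed]
  | cast a => simp [Fin.tail, Fin.init, Fin.coeSucc_eq_succ]

lemma isPath_tail_of_closed {k : ℕ} {w : Fin (k + 2) → Fin n} (hclosed : w (Fin.last _) = w 0)
    (hinj : Function.Injective (Fin.init w))
    (harc : ∀ x : Fin (k + 1), A (w x.castSucc) (w x.succ)) :
    IsPath n A k (w 1) (w (Fin.last _)) := by
  refine ⟨Fin.tail w, rfl, rfl, ?_, fun x => ?_⟩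
  · rw [tail_eq_init_comp_finRotate hclosed]
    exact hinj.comp (finRotate _).injective
  · simpa only [Fin.tail, Fin.succ_castSucc] using harc x.succ

lemma notMem_iInter_Tpow_union_Rmat {m : ℕ} {i μ : Fin n} (hp : IsPath n A (m + 1) i μ)
    (ha : A μ i) (hne : μ ≠ i) : i ∉ ⋂ ν, Tpow n A m i ν ∪ Rmat n A ν i := fun h =>
  (mem_iInter.1 h μ).elim (notMem_Tpow_of_isPath m hp) fun hR => by
    rw [Rmat_eq_singleton ha hne] at hR
    exact hne hR.symm

end

/-- If there is a `k`-cycle `v_i = w₀, w₁, …, w_k = v_i` through `v_i` (`k ≥ 2`),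
then `v_i ∈ (T^{k-1})_{μ₂ i}` where `v_{μ₂} = w₁`; in particular
`(T^{k-1})_{μ₂ i} ≠ V` and consequently `(S^k)_{ii} ≠ V`. -/
theorem mem_Tpow_of_cycle (n : ℕ) (A : Fin n → Fin n → Prop) (k : ℕ)
    (hk : 2 ≤ k) (i : Fin n) (w : Fin (k + 1) → Fin n)
    (h0 : w 0 = i) (hlast : w (Fin.last k) = i)
    (hinj : Function.Injective (fun x : Fin k => w x.castSucc))
    (harc : ∀ x : Fin k, A (w x.castSucc) (w x.succ)) :
    i ∈ Tpow n A (k - 2) (w 1) i ∧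
      Tpow n A (k - 2) (w 1) i ≠ Set.univ ∧
      (⋂ ν, Tpow n A (k - 2) i ν ∪ Rmat n A ν i) ≠ Set.univ := by
  obtain ⟨m, rfl⟩ : ∃ m, k = m + 2 := ⟨k - 2, by omega⟩
  rw [Nat.add_sub_cancel]
  subst h0
  have hclosed : w (Fin.last _) = w 0 := hlast
  have htail := isPath_tail_of_closed hclosed hinj harc
  rw [hclosed] at htail
  refine ⟨mem_Tpow_self m _ _, fun h => ?_, fun h => ?_⟩
  · exact notMem_Tpow_of_isPath m htail (h ▸ mem_univ _)
  · refine notMem_iInter_Tpow_union_Rmat (isPath_init hinj harc) ?_ ?_ (h ▸ mem_univ _)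
    · simpa only [hclosed, Fin.succ_last] using harc (Fin.last _)
    · exact (hinj.ne Fin.last_pos.ne).symm
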